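/- arXiv:2106.03057 — 3 statements merged into one kernel-verified Lean document; each statement's English description precedes it below -/
import Mathlib

section
/- For all real u > 0, 1 − e^{−u} ≥ e^{−1/u}. -/
theorem one_sub_exp_neg_ge (u : ℝ) (hu : 0 < u) :
    Real.exp (-(1 / u)) ≤ 1 - Real.exp (-u) := by
  have h1 : (1 / u) + 1 ≤ Real.exp (1 / u) := Real.add_one_le_exp _
  have h2 : u + 1 ≤ Real.exp u := Real.add_one_le_exp _
  have hpos : (0:ℝ) < 1 / u + 1 := by positivity
  have hA : Real.exp (-(1 / u)) ≤ 1 / (1 / u + 1) := by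
    rw [Real.exp_neg, inv_eq_one_div]
    exact one_div_le_one_div_of_le hpos h1
  have hB : Real.exp (-u) ≤ 1 / (u + 1) := by
    rw [Real.exp_neg, inv_eq_one_div]
    exact one_div_le_one_div_of_le (by positivity) h2
  have key : 1 / (1 / u + 1) = 1 - 1 / (u + 1) := by
    rw [div_eq_iff (by positivity)]
    field_simp
    ring
  linarith [hA, hB, key ▸ hA]
end

section
/- For every integer n ≥ 3, the number of distinct prime factors satisfies ω(n) ≤ (log n / log log n)·(1 + O(1/log log n)); in particular there is an absolute constant C such that ω(n) ≤ (log n / log log n)(1 + C/log log n) for all n ≥ 3. -/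
/-!
Order the prime factors of `n` as `q₀ < q₁ < ⋯ < q_{k-1}`, `k = ω(n)`. The `j`-th one satisfies
`j + 1 ≤ π(q_j) ≤ q_j`, so Chebyshev's bound `π(q) log q ≤ 5q` gives `(j+1) log (j+1) ≤ 5 q_j`,
i.e. `log q_j ≥ log (j+1) + log log (j+1) - log 5`. Summing (with Stirling, and
`log log (j+1) ≥ log log k - log 2` for `j ≥ √k`) yields
`k (log k + log log k - c) ≤ ∑ log q_j ≤ log n`. Inverting this inequality: if `k > log n / l`,
`l = log log n`, then `log k + log log k ≥ l - log 2`, hence `k ≤ log n / (l - c - 1)`.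
-/

open Finset Real

theorem Finset.sum_card_filter_lt_eq_sum_range {α M : Type*} [LinearOrder α] [AddCommMonoid M]
    (s : Finset α) (g : ℕ → M) : ∑ a ∈ s, g #{b ∈ s | b < a} = ∑ j ∈ range #s, g j := by
  induction s using Finset.induction_on_max with
  | empty => simp
  | insert a s ha ih =>
    have has : a ∉ s := fun h => lt_irrefl a (ha a h)
    have hfilter : ∀ x ∈ s, {b ∈ insert a s | b < x} = {b ∈ s | b < x} := fun x hx => by
      rw [filter_insert, if_neg (ha x hx).not_gt]
    rw [sum_insert has, card_insert_of_notMem has, sum_range_succ, ← ih,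
      sum_congr rfl fun x hx => congrArg g (congrArg card (hfilter x hx)),
      filter_insert, if_neg (lt_irrefl a), filter_true_of_mem ha, add_comm]

theorem Nat.primeCounting_le_self (n : ℕ) : n.primeCounting ≤ n := by
  rw [← Nat.primesLE_card_eq_primeCounting, Nat.primesLE_eq_filter_Icc_one]
  exact (card_filter_le _ _).trans (by simp)

theorem card_filter_lt_lt_primeCounting {S : Finset ℕ} (hS : ∀ p ∈ S, p.Prime) {q : ℕ}
    (hq : q ∈ S) : #{p ∈ S | p < q} < q.primeCounting := by
  have hq' : q ∉ {p ∈ S | p < q} := fun h => lt_irrefl q (mem_filter.1 h).2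
  calc #{p ∈ S | p < q} < #(insert q {p ∈ S | p < q}) := by
        rw [card_insert_of_notMem hq']; exact Nat.lt_succ_self _
    _ ≤ #(Nat.primesLE q) := card_le_card fun p hp => by
        rw [mem_insert, mem_filter] at hp
        rcases hp with rfl | ⟨hpS, hpq⟩
        · exact Nat.mem_primesLE.2 ⟨le_rfl, hS p hq⟩
        · exact Nat.mem_primesLE.2 ⟨hpq.le, hS p hpS⟩
    _ = q.primeCounting := Nat.primesLE_card_eq_primeCounting q

theorem primeCounting_mul_log_le (q : ℕ) : (q.primeCounting : ℝ) * log q ≤ 5 * q := by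
  rcases le_or_gt q 1 with hq | hq
  · simp [Nat.primeCounting_eq_zero_iff.mpr hq]
  have hq' : (1 : ℝ) < q := by exact_mod_cast hq
  have hlog : 0 < log √(q : ℝ) := log_pos (lt_sqrt_of_sq_lt (by simpa using hq'))
  have hpi : (q.primeCounting : ℝ) * log √q ≤ log 4 * q + √q * log √q := by
    have := mul_le_mul_of_nonneg_right (Chebyshev.pi_le_log4_mul_div hq') hlog.le
    rwa [Nat.floor_natCast, add_mul, div_mul_cancel₀ _ hlog.ne'] at this
  have hsqrt : √q * log √q ≤ q :=
    calc √q * log √q ≤ √q * √q := by gcongr; exact log_le_self (sqrt_nonneg _)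
      _ = q := mul_self_sqrt (Nat.cast_nonneg q)
  have hlog4 : log 4 * q ≤ 1.5 * q := by
    gcongr
    rw [show (4 : ℝ) = 2 ^ 2 by norm_num, log_pow]
    linarith [log_two_lt_d9]
  rw [log_sqrt (Nat.cast_nonneg q)] at hpi hsqrt
  linarith

noncomputable def logPrimeMinorant (j : ℕ) : ℝ :=
  log (j + 1) + max 0 (log (log (j + 1)) - log 5)

theorem logPrimeMinorant_le_log {j q : ℕ} (h : j < q.primeCounting) :
    logPrimeMinorant j ≤ log q := by
  have hjq : (j + 1 : ℝ) ≤ q := by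
    exact_mod_cast (Nat.succ_le_of_lt h).trans (Nat.primeCounting_le_self q)
  have hlog : log (j + 1) ≤ log q := log_le_log (by positivity) hjq
  rw [logPrimeMinorant]
  rcases le_total (log (log (j + 1)) - log 5) 0 with hneg | hpos
  · rw [max_eq_left hneg]; linarith
  rw [max_eq_right hpos]
  have hlog_pos : 0 < log (j + 1 : ℝ) := by
    rcases Nat.eq_zero_or_pos j with rfl | hj
    · norm_num at hpos; linarith [log_pos (by norm_num : (1 : ℝ) < 5)]
    · exact log_pos (by norm_cast; omega)
  have hmul : (j + 1 : ℝ) * log (j + 1) ≤ 5 * q :=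
    calc (j + 1 : ℝ) * log (j + 1) ≤ q.primeCounting * log q := by
          gcongr; exact_mod_cast h
      _ ≤ 5 * q := primeCounting_mul_log_le q
  have := log_le_log (by positivity) hmul
  rw [log_mul (by positivity) hlog_pos.ne', log_mul (by norm_num) (by linarith)] at this
  linarith

theorem sum_logPrimeMinorant_le_sum_log {S : Finset ℕ} (hS : ∀ p ∈ S, p.Prime) :
    ∑ j ∈ range #S, logPrimeMinorant j ≤ ∑ p ∈ S, log p := by
  rw [← sum_card_filter_lt_eq_sum_range]
  exact sum_le_sum fun q hq => logPrimeMinorant_le_log (card_filter_lt_lt_primeCounting hS hq)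

theorem mul_log_sub_le_sum_log_succ (k : ℕ) :
    k * log k - k ≤ ∑ j ∈ range k, log (j + 1 : ℝ) := by
  rcases eq_or_ne k 0 with rfl | hk
  · simp
  have hsum : ∑ j ∈ range k, log (j + 1 : ℝ) = log k.factorial := by
    rw [← prod_range_add_one_eq_factorial, Nat.cast_prod, log_prod fun j _ => by positivity]
    push_cast; rfl
  have := Stirling.le_log_factorial_stirling hk
  have : 0 ≤ log (k : ℝ) := log_natCast_nonneg k
  have : 0 ≤ log (2 * π) := log_nonneg (by linarith [pi_gt_three])
  linarith

theorem log_log_sub_log_ten_le {k j : ℕ} (hkj : k < (j + 1) ^ 2) :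
    log (log k) - log 10 ≤ max 0 (log (log (j + 1 : ℝ)) - log 5) := by
  rcases le_total (log (log k)) (log 10) with hsmall | hlarge
  · exact le_max_of_le_left (by linarith)
  refine le_max_of_le_right ?_
  have hlogk : 1 < log (k : ℝ) := by
    have h10 : 0 < log (log (k : ℝ)) := lt_of_lt_of_le (log_pos (by norm_num)) hlarge
    by_contra! h
    linarith [log_nonpos (log_natCast_nonneg k) h]
  have hk : (0 : ℝ) < k := by
    rcases Nat.eq_zero_or_pos k with rfl | hk
    · norm_num at hlogk
    · exact_mod_cast hk
  have hhalf : log k / 2 ≤ log (j + 1 : ℝ) := by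
    have := log_le_log hk (le_of_lt (show (k : ℝ) < (j + 1) ^ 2 by exact_mod_cast hkj))
    rw [log_pow] at this
    push_cast at this
    linarith
  have := log_le_log (by linarith) hhalf
  rw [log_div (by linarith) two_ne_zero] at this
  rw [show (10 : ℝ) = 2 * 5 by norm_num, log_mul two_ne_zero (by norm_num)]
  linarith

theorem mul_log_log_sub_le_sum_max (k : ℕ) :
    k * (log (log k) - log 10) - 2 * k
      ≤ ∑ j ∈ range k, max 0 (log (log (j + 1 : ℝ)) - log 5) := by
  set m := Nat.sqrt k
  have hmk : m ≤ k := Nat.sqrt_le_self k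
  have hm : (m : ℝ) ≤ √k := Real.le_sqrt_of_sq_le (by exact_mod_cast Nat.sqrt_le' k)
  have hloglog : log (log k) ≤ 2 * √k := by
    calc log (log k) ≤ log k := log_le_self (log_natCast_nonneg k)
      _ = 2 * log √k := by rw [log_sqrt (Nat.cast_nonneg k)]; ring
      _ ≤ 2 * √k := by gcongr; exact log_le_self (sqrt_nonneg _)
  have hhead : (m : ℝ) * log (log k) ≤ 2 * k :=
    calc (m : ℝ) * log (log k) ≤ m * (2 * √k) := by gcongr
      _ ≤ √k * (2 * √k) := by gcongr
      _ = 2 * k := by rw [mul_left_comm, mul_self_sqrt (Nat.cast_nonneg k)]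
  have htail : ((k - m : ℕ) : ℝ) * (log (log k) - log 10)
      ≤ ∑ j ∈ Ico m k, max 0 (log (log (j + 1 : ℝ)) - log 5) := by
    rw [← Nat.card_Ico, ← nsmul_eq_mul]
    refine card_nsmul_le_sum _ _ _ fun j hj => log_log_sub_log_ten_le ?_
    exact (Nat.lt_succ_sqrt' k).trans_le (Nat.pow_le_pow_left (by simp at hj; omega) 2)
  rw [← sum_range_add_sum_Ico _ hmk]
  have : 0 ≤ ∑ j ∈ range m, max 0 (log (log (j + 1 : ℝ)) - log 5) :=
    sum_nonneg fun _ _ => le_max_left _ _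
  have : 0 ≤ (m : ℝ) * log 10 := by positivity
  rw [Nat.cast_sub hmk] at htail
  linarith

theorem mul_log_add_log_log_sub_le_sum_logPrimeMinorant (k : ℕ) :
    k * (log k + log (log k) - (3 + log 10)) ≤ ∑ j ∈ range k, logPrimeMinorant j := by
  simp only [logPrimeMinorant, sum_add_distrib]
  linarith [mul_log_sub_le_sum_log_succ k, mul_log_log_sub_le_sum_max k]

theorem card_mul_log_add_log_log_sub_le_sum_log {S : Finset ℕ} (hS : ∀ p ∈ S, p.Prime) :
    #S * (log #S + log (log #S) - (3 + log 10)) ≤ ∑ p ∈ S, log p :=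
  (mul_log_add_log_log_sub_le_sum_logPrimeMinorant #S).trans (sum_logPrimeMinorant_le_sum_log hS)

theorem card_mul_log_two_le_sum_log {S : Finset ℕ} (hS : ∀ p ∈ S, p.Prime) :
    #S * log 2 ≤ ∑ p ∈ S, log p := by
  rw [← nsmul_eq_mul]
  exact card_nsmul_le_sum _ _ _ fun p hp =>
    log_le_log two_pos (by exact_mod_cast (hS p hp).two_le)

theorem sum_log_primeFactors_le_log {n : ℕ} (hn : n ≠ 0) :
    ∑ p ∈ n.primeFactors, log p ≤ log n := by
  have hprod_pos : 0 < ∏ p ∈ n.primeFactors, p :=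
    prod_pos fun p hp => (Nat.prime_of_mem_primeFactors hp).pos
  have hprod_le := Nat.le_of_dvd (Nat.pos_of_ne_zero hn) (Nat.prod_primeFactors_dvd n)
  rw [← log_prod fun p hp => by exact_mod_cast (Nat.prime_of_mem_primeFactors hp).ne_zero,
    ← Nat.cast_prod]
  exact log_le_log (by exact_mod_cast hprod_pos) (by exact_mod_cast hprod_le)

theorem log_le_half_self {x : ℝ} (hx : 0 < x) : log x ≤ x / 2 := by
  have := log_le_sub_one_of_pos (half_pos hx)
  rw [log_div hx.ne' two_ne_zero] at this
  linarith [log_two_lt_d9]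

theorem le_div_log_mul_of_mul_log_add_log_log_le {c y x : ℝ} (hc : 0 ≤ c) (hy : 1 < y)
    (hx : 0 ≤ x) (hcrude : x * log 2 ≤ y) (hmain : x * (log x + log (log x) - c) ≤ y) :
    x ≤ y / log y * (1 + 8 * (c + 1) ^ 2 / log y) := by
  set l := log y
  set a := c + 1 with ha_def
  have ha : 1 ≤ a := by linarith
  have hl : 0 < l := log_pos hy
  rw [show y / l * (1 + 8 * a ^ 2 / l) = y * (l + 8 * a ^ 2) / l ^ 2 by field_simp,
    le_div_iff₀ (by positivity)]
  rcases le_or_gt x (y / l) with hsmall | hlarge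
  · rw [le_div_iff₀ hl] at hsmall
    nlinarith [sq_nonneg a]
  have hlogx : l - log l ≤ log x := by
    have := log_le_log (by positivity) hlarge.le
    rwa [log_div (by positivity) hl.ne'] at this
  have hlog_half := log_le_half_self hl
  have hloglogx : log l - log 2 ≤ log (log x) := by
    rw [← log_div hl.ne' two_ne_zero]
    exact log_le_log (by positivity) (by linarith)
  have hkey : x * (l - a) ≤ y :=
    calc x * (l - a) ≤ x * (log x + log (log x) - c) :=
          mul_le_mul_of_nonneg_left (by linarith [log_two_lt_d9]) hx
      _ ≤ y := hmain
  rcases le_or_gt (2 * a) l with hl2 | hl2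
  · have hxa : x * a ≤ y := by nlinarith
    nlinarith [mul_le_mul_of_nonneg_right hkey (by linarith : 0 ≤ l + a),
      mul_le_mul_of_nonneg_right hxa (by linarith : 0 ≤ a),
      mul_le_mul_of_nonneg_left (by nlinarith : 2 * a ≤ 8 * a ^ 2) (by linarith : 0 ≤ y)]
  · have hx2 : x ≤ 2 * y := by nlinarith [log_two_gt_d9]
    have hl_sq : l ^ 2 ≤ 4 * a ^ 2 := by nlinarith
    nlinarith [mul_le_mul_of_nonneg_left hl_sq hx]

theorem omega_upper_bound :
    ∃ C : ℝ, ∀ n : ℕ, 3 ≤ n →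
      (n.primeFactors.card : ℝ)
        ≤ (Real.log n / Real.log (Real.log n)) * (1 + C / Real.log (Real.log n)) := by
  refine ⟨8 * (3 + log 10 + 1) ^ 2, fun n hn => ?_⟩
  have hprimes : ∀ p ∈ n.primeFactors, p.Prime := fun p hp => Nat.prime_of_mem_primeFactors hp
  have hsum := sum_log_primeFactors_le_log (n := n) (by omega)
  have hlog_n : 1 < log n := by
    rw [lt_log_iff_exp_lt (by positivity)]
    have : (3 : ℝ) ≤ n := by exact_mod_cast hn
    linarith [exp_one_lt_d9]
  exact le_div_log_mul_of_mul_log_add_log_log_le (by positivity) hlog_n (Nat.cast_nonneg _)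
    ((card_mul_log_two_le_sum_log hprimes).trans hsum)
    ((card_mul_log_add_log_log_sub_le_sum_log hprimes).trans hsum)
end

section
/- For any positive real numbers λ and any prime-indexed set {p₁,…,p_s} of distinct primes, and any positive integer m, one has ∑_{m₁+⋯+m_s = m, m_i ≥ 0} multinomial(2m; 2m₁,…,2m_s) · ∏_{i=1}^s binom(2m_i, m_i)(4/p_i)^{m_i} ≤ ((2m)!/m!)·(∑_{i=1}^s 4/p_i)^m. -/
open Finset

theorem multinomial_moment_bound (s m : ℕ) (hm : 0 < m) (p : Fin s → ℕ)
    (hp : ∀ i, (p i).Prime) (hinj : Function.Injective p) :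
    ∑ f ∈ Finset.Nat.antidiagonalTuple s m,
        (Nat.multinomial Finset.univ (fun i => 2 * f i) : ℝ)
          * ∏ i, (Nat.choose (2 * f i) (f i) : ℝ) * (4 / (p i : ℝ)) ^ (f i)
      ≤ ((2 * m).factorial : ℝ) / (m.factorial : ℝ) * (∑ i, 4 / (p i : ℝ)) ^ m := by
  have key : ((∑ i, 4 / (p i : ℝ)) ^ m) = ∑ f ∈ Finset.Nat.antidiagonalTuple s m,
      (Nat.multinomial Finset.univ f : ℝ) * ∏ i, (4 / (p i : ℝ)) ^ (f i) := by
    rw [← Finset.piAntidiag_univ_fin_eq_antidiagonalTuple m s,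
      Finset.sum_pow_eq_sum_piAntidiag]
  rw [key, Finset.mul_sum]
  apply Finset.sum_le_sum
  intro f hf
  have hsum : ∑ i, f i = m := Finset.Nat.mem_antidiagonalTuple.mp hf
  -- cast facts
  have hchoose : ∀ i : Fin s, ((2 * f i).choose (f i) : ℝ) * ((f i).factorial : ℝ)
      * ((f i).factorial : ℝ) = ((2 * f i).factorial : ℝ) := by
    intro i
    have h := Nat.choose_mul_factorial_mul_factorial
      (Nat.le_mul_of_pos_left (f i) (by norm_num) : f i ≤ 2 * f i)
    have h2 : 2 * f i - f i = f i := by omega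
    rw [h2] at h
    exact_mod_cast h
  have h1 : (∏ i, ((2 * f i).factorial : ℝ))
      * (Nat.multinomial Finset.univ (fun i => 2 * f i) : ℝ) = ((2 * m).factorial : ℝ) := by
    have := Nat.multinomial_spec (Finset.univ : Finset (Fin s)) (fun i => 2 * f i)
    rw [← Finset.mul_sum, hsum] at this
    exact_mod_cast this
  have h3 : (∏ i, ((f i).factorial : ℝ)) * (Nat.multinomial Finset.univ f : ℝ)
      = (m.factorial : ℝ) := by
    have := Nat.multinomial_spec (Finset.univ : Finset (Fin s)) f
    rw [hsum] at this
    exact_mod_cast this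
  set P : ℝ := ∏ i, ((f i).factorial : ℝ) with hP
  have hP1 : 1 ≤ P := by
    rw [hP]
    have : ∀ i ∈ (Finset.univ : Finset (Fin s)), (1:ℝ) ≤ ((f i).factorial : ℝ) :=
      fun i _ => by exact_mod_cast (f i).factorial_pos
    calc (1:ℝ) = ∏ _i : Fin s, (1:ℝ) := by simp
      _ ≤ ∏ i, ((f i).factorial : ℝ) :=
        Finset.prod_le_prod (fun i _ => zero_le_one) this
  have hP0 : 0 < P := lt_of_lt_of_le one_pos hP1
  have hprod : ∏ i, ((2 * f i).factorial : ℝ)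
      = (∏ i, ((2 * f i).choose (f i) : ℝ)) * P * P := by
    rw [hP, ← Finset.prod_mul_distrib, ← Finset.prod_mul_distrib]
    exact Finset.prod_congr rfl fun i _ => (hchoose i).symm
  -- main algebraic identity
  have hm0 : (0:ℝ) < (m.factorial : ℝ) := by exact_mod_cast m.factorial_pos
  have hmain : (Nat.multinomial Finset.univ (fun i => 2 * f i) : ℝ)
      * (∏ i, ((2 * f i).choose (f i) : ℝ)) * P
      = ((2 * m).factorial : ℝ) / (m.factorial : ℝ) * (Nat.multinomial Finset.univ f : ℝ) := by
    have h4 : (Nat.multinomial Finset.univ (fun i => 2 * f i) : ℝ)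
        * (∏ i, ((2 * f i).choose (f i) : ℝ)) * P * P = ((2 * m).factorial : ℝ) := by
      rw [← h1, hprod]; ring
    have h5 : ((2 * m).factorial : ℝ) / (m.factorial : ℝ)
        * (Nat.multinomial Finset.univ f : ℝ) * P = ((2 * m).factorial : ℝ) := by
      have h3' : (Nat.multinomial Finset.univ f : ℝ) * P = (m.factorial : ℝ) := by
        rw [mul_comm]; exact h3
      rw [div_mul_eq_mul_div, div_mul_eq_mul_div, mul_assoc, h3', mul_div_assoc,
        div_self (ne_of_gt hm0), mul_one]
    have := h4.trans h5.symm
    exact mul_right_cancel₀ (ne_of_gt hP0) this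
  have hX : (0:ℝ) ≤ ∏ i, (4 / (p i : ℝ)) ^ (f i) := by positivity
  have hC : (0:ℝ) ≤ (Nat.multinomial Finset.univ (fun i => 2 * f i) : ℝ)
      * ∏ i, ((2 * f i).choose (f i) : ℝ) := by positivity
  calc (Nat.multinomial Finset.univ (fun i => 2 * f i) : ℝ)
        * ∏ i, ((2 * f i).choose (f i) : ℝ) * (4 / (p i : ℝ)) ^ (f i)
      = ((Nat.multinomial Finset.univ (fun i => 2 * f i) : ℝ)
          * ∏ i, ((2 * f i).choose (f i) : ℝ)) * ∏ i, (4 / (p i : ℝ)) ^ (f i) := by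
        rw [Finset.prod_mul_distrib]; ring
    _ ≤ ((Nat.multinomial Finset.univ (fun i => 2 * f i) : ℝ)
          * (∏ i, ((2 * f i).choose (f i) : ℝ)) * P) * ∏ i, (4 / (p i : ℝ)) ^ (f i) := by
        apply mul_le_mul_of_nonneg_right _ hX
        nlinarith [hC, hP1]
    _ = ((2 * m).factorial : ℝ) / (m.factorial : ℝ)
          * ((Nat.multinomial Finset.univ f : ℝ) * ∏ i, (4 / (p i : ℝ)) ^ (f i)) := by
        rw [hmain]; ring
end
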